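/- arXiv:1404.2262 — 2 statements merged into one kernel-verified Lean document; each statement's English description precedes it below -/
import Mathlib

section
/- Let A be a complex Banach algebra and let I be a closed two-sided ideal of A. Suppose I has a bounded Δ-weak approximate identity (with respect to the character space of A), and the quotient Banach algebra A/I has a bounded left approximate identity, i.e., a norm-bounded net (f_δ + I) in A/I such that ‖f_δ·a − a + I‖ → 0 for every a ∈ A. Then A has a bounded Δ-weak approximate identity. -/
open Filter Topology WeakDual

/-- A subset `B` of a (possibly non-unital) complex Banach algebra `A` has a *bounded
Δ-weak approximate identity* (with respect to the character space `Δ(A)` of `A`) if there is a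
norm-bounded net `(e_α)` in `B` such that for every `b ∈ B` and every compact subset `K` of
`Δ(A)`, `sup_{φ ∈ K} |φ (b * e_α) - φ b| → 0`, i.e. `φ (b * e_α) → φ b` uniformly on `K`. -/
def HasBoundedDeltaWeakApproxIdentity (A : Type*) [NonUnitalNormedRing A] [NormedSpace ℂ A]
    [IsScalarTower ℂ A A] [SMulCommClass ℂ A A] (B : Set A) : Prop :=
  ∃ (ι : Type) (_ : Nonempty ι) (_ : SemilatticeSup ι) (e : ι → A) (C : ℝ),
    (∀ i, e i ∈ B) ∧ (∀ i, ‖e i‖ ≤ C) ∧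
    ∀ b ∈ B, ∀ K : Set (characterSpace ℂ A), IsCompact K →
      TendstoUniformlyOn (fun i (φ : characterSpace ℂ A) => φ (b * e i))
        (fun φ => φ b) Filter.atTop K

/-- Characters on a Banach algebra are contractive. -/
lemma char_norm_apply_le {A : Type*} [NonUnitalNormedRing A] [NormedSpace ℂ A]
    [IsScalarTower ℂ A A] [SMulCommClass ℂ A A]
    (φ : characterSpace ℂ A) (x : A) : ‖φ x‖ ≤ ‖x‖ := by
  set ψ : A →L[ℂ] ℂ := WeakDual.CharacterSpace.toCLM φ with hψ
  have hψx : ∀ z : A, φ z = ψ z := fun z => rfl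
  by_contra h
  push_neg at h
  rcases eq_or_lt_of_le (norm_nonneg x) with hx0 | hx0
  · have : x = 0 := norm_eq_zero.mp hx0.symm
    rw [this, map_zero] at h
    simp at h
  · have key : ∀ n : ℕ, ∃ z : A, ‖z‖ ≤ ‖x‖ ^ (n + 1) ∧ φ z = (φ x) ^ (n + 1) := by
      intro n
      induction n with
      | zero => exact ⟨x, by simp, by simp⟩
      | succ m ih =>
        obtain ⟨z, hz, hφz⟩ := ih
        refine ⟨z * x, ?_, ?_⟩
        · calc ‖z * x‖ ≤ ‖z‖ * ‖x‖ := norm_mul_le _ _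
            _ ≤ ‖x‖ ^ (m + 1) * ‖x‖ := by
                exact mul_le_mul_of_nonneg_right hz (norm_nonneg x)
            _ = ‖x‖ ^ (m + 1 + 1) := by ring
        · rw [map_mul, hφz]; ring
    set r : ℝ := ‖φ x‖ / ‖x‖ with hr
    have hr1 : 1 < r := (one_lt_div hx0).mpr h
    obtain ⟨n, hn⟩ := pow_unbounded_of_one_lt ‖ψ‖ hr1
    obtain ⟨z, hz, hφz⟩ := key n
    have h1 : ‖φ x‖ ^ (n + 1) ≤ ‖ψ‖ * ‖x‖ ^ (n + 1) := by
      calc ‖φ x‖ ^ (n + 1) = ‖φ z‖ := by rw [hφz, norm_pow]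
        _ = ‖ψ z‖ := by rw [hψx]
        _ ≤ ‖ψ‖ * ‖z‖ := ψ.le_opNorm z
        _ ≤ ‖ψ‖ * ‖x‖ ^ (n + 1) := by
            exact mul_le_mul_of_nonneg_left hz (norm_nonneg _)
    have h2 : r ^ (n + 1) ≤ ‖ψ‖ := by
      rw [hr, div_pow, div_le_iff₀ (by positivity)]
      exact h1
    have h3 : r ^ n ≤ r ^ (n + 1) :=
      pow_le_pow_right₀ (le_of_lt hr1) (Nat.le_succ n)
    linarith



/-- if `I` is a closed two-sided ideal of a complex Banach algebra `A` having a
bounded Δ-weak approximate identity (w.r.t. the character space of `A`), and the quotient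
Banach algebra `A/I` has a bounded left approximate identity — i.e. a net `(f_δ)` in `A` with
`(f_δ + I)` bounded in the quotient norm (which is the distance to `I`) and
`‖f_δ * a - a + I‖ → 0` for every `a ∈ A` — then `A` has a bounded Δ-weak approximate
identity. -/

theorem stmt_0 {A : Type*} [NonUnitalNormedRing A] [NormedSpace ℂ A]
    [IsScalarTower ℂ A A] [SMulCommClass ℂ A A] [CompleteSpace A]
    (I : TwoSidedIdeal A) (hclosed : IsClosed (I : Set A))
    (hI : HasBoundedDeltaWeakApproxIdentity A (I : Set A))
    (hquot : ∃ (ι : Type) (_ : Nonempty ι) (_ : SemilatticeSup ι) (f : ι → A) (N : ℝ),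
      (∀ δ, Metric.infDist (f δ) (I : Set A) ≤ N) ∧
      (∀ a : A, Tendsto (fun δ => Metric.infDist (f δ * a - a) (I : Set A)) atTop (𝓝 0))) :
    HasBoundedDeltaWeakApproxIdentity A (Set.univ : Set A) := by
  unfold HasBoundedDeltaWeakApproxIdentity at hI ⊢
  classical
  obtain ⟨κ, hκne, hκs, e, C, heI, heC, heconv⟩ := hI
  obtain ⟨σ, hσne, hσs, f, N, hfN, hfconv⟩ := hquot
  have hInemp : (I : Set A).Nonempty := ⟨0, I.zero_mem⟩
  have hC0 : 0 ≤ C := le_trans (norm_nonneg _) (heC (Classical.arbitrary κ))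
  -- replace `f` by a bounded representative modulo `I`
  have hmod : ∀ δ, ∃ gg, gg ∈ (I : Set A) ∧ ‖f δ - gg‖ ≤ N + 1 := by
    intro δ
    have h1 : Metric.infDist (f δ) (I : Set A) < N + 1 :=
      lt_of_le_of_lt (hfN δ) (by linarith [Metric.infDist_nonneg (s := (I : Set A)) (x := f δ), hfN δ])
    obtain ⟨y, hy, hd⟩ := (Metric.infDist_lt_iff hInemp).mp h1
    exact ⟨y, hy, le_of_lt (by rwa [dist_eq_norm] at hd)⟩
  choose g hgI hgN using hmod
  set f' : σ → A := fun δ => f δ - g δ with hf'def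
  have hN1 : 0 ≤ N + 1 := le_trans (norm_nonneg _) (hgN (Classical.arbitrary σ))
  have hf'conv : ∀ a : A,
      Tendsto (fun δ => Metric.infDist (f' δ * a - a) (I : Set A)) atTop (𝓝 0) := by
    intro a
    refine squeeze_zero (fun δ => Metric.infDist_nonneg) (fun δ => ?_) (hfconv a)
    have hrepr : f' δ * a - a = (f δ * a - a) - g δ * a := by
      simp only [hf'def, sub_mul]; abel
    rw [hrepr]
    refine le_of_forall_pos_le_add fun ε hε => ?_
    obtain ⟨y, hy, hd⟩ := (Metric.infDist_lt_iff hInemp).mp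
      (lt_add_of_pos_right (Metric.infDist (f δ * a - a) (I : Set A)) hε)
    calc Metric.infDist ((f δ * a - a) - g δ * a) (I : Set A)
        ≤ dist ((f δ * a - a) - g δ * a) (y - g δ * a) :=
          Metric.infDist_le_dist_of_mem (by
            exact SetLike.mem_coe.mpr
              (I.sub_mem (SetLike.mem_coe.mp hy)
                (I.mul_mem_right _ _ (SetLike.mem_coe.mp (hgI δ)))))
      _ = dist (f δ * a - a) y := dist_sub_right _ _ _
      _ ≤ Metric.infDist (f δ * a - a) (I : Set A) + ε := le_of_lt hd
  -- the new net
  refine ⟨σ × (σ → κ), inferInstance, inferInstance,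
    fun p => f' p.1 + e (p.2 p.1) - f' p.1 * e (p.2 p.1),
    (N + 1) + C + (N + 1) * C, fun _ => trivial, ?_, ?_⟩
  · rintro ⟨δ, F⟩
    calc ‖f' δ + e (F δ) - f' δ * e (F δ)‖
        ≤ ‖f' δ + e (F δ)‖ + ‖f' δ * e (F δ)‖ := norm_sub_le _ _
      _ ≤ (‖f' δ‖ + ‖e (F δ)‖) + ‖f' δ‖ * ‖e (F δ)‖ :=
          add_le_add (norm_add_le _ _) (norm_mul_le _ _)
      _ ≤ ((N + 1) + C) + (N + 1) * C :=
          add_le_add (add_le_add (hgN δ) (heC (F δ)))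
            (mul_le_mul (hgN δ) (heC (F δ)) (norm_nonneg _) hN1)
  · intro a _ K hK
    rw [Metric.tendstoUniformlyOn_iff]
    intro ε hε
    have hC1 : (0:ℝ) < 1 + C := by linarith
    set ε2 : ℝ := ε / (6 * (1 + C)) with hε2def
    have hε2 : 0 < ε2 := by positivity
    set b : σ → A := fun δ => f' δ * a - a with hbdef
    have hdec : ∀ δ, ∃ c, c ∈ (I : Set A) ∧
        ‖b δ - c‖ < Metric.infDist (b δ) (I : Set A) + ε2 := by
      intro δ
      obtain ⟨y, hy, hd⟩ := (Metric.infDist_lt_iff hInemp).mp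
        (lt_add_of_pos_right (Metric.infDist (b δ) (I : Set A)) hε2)
      exact ⟨y, hy, by rwa [dist_eq_norm] at hd⟩
    choose c hcI hcN using hdec
    obtain ⟨δ0, hδ0⟩ := eventually_atTop.mp ((hf'conv a).eventually_lt_const hε2)
    have hF0ex : ∀ δ, ∃ α0 : κ, ∀ α ≥ α0, ∀ φ ∈ K,
        dist (φ (c δ)) (φ (c δ * e α)) < ε / 3 := by
      intro δ
      have h := heconv (c δ) (hcI δ) K hK
      rw [Metric.tendstoUniformlyOn_iff] at h
      exact eventually_atTop.mp (h (ε / 3) (by positivity))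
    choose F0 hF0 using hF0ex
    rw [eventually_atTop]
    refine ⟨(δ0, F0), ?_⟩
    rintro ⟨δ, F⟩ hp φ hφ
    have hδ : δ0 ≤ δ := hp.1
    have hF : F0 δ ≤ F δ := hp.2 δ
    have key : φ (a * (f' δ + e (F δ) - f' δ * e (F δ))) - φ a
        = (φ (c δ) - φ (c δ * e (F δ)))
          + (φ (b δ) - φ (c δ)) * (1 - φ (e (F δ))) := by
      simp only [hbdef, mul_add, mul_sub, map_add, map_sub, map_mul]
      ring
    have h1 : ‖φ (c δ) - φ (c δ * e (F δ))‖ < ε / 3 := by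
      rw [← dist_eq_norm]
      exact hF0 δ (F δ) hF φ hφ
    have h2 : ‖φ (b δ) - φ (c δ)‖ < 2 * ε2 := by
      rw [← map_sub]
      calc ‖φ (b δ - c δ)‖ ≤ ‖b δ - c δ‖ := char_norm_apply_le φ _
        _ < Metric.infDist (b δ) (I : Set A) + ε2 := hcN δ
        _ < 2 * ε2 := by have := hδ0 δ hδ; linarith
    have h3 : ‖(1 : ℂ) - φ (e (F δ))‖ ≤ 1 + C := by
      calc ‖(1 : ℂ) - φ (e (F δ))‖ ≤ ‖(1 : ℂ)‖ + ‖φ (e (F δ))‖ := norm_sub_le _ _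
        _ ≤ 1 + C := by
            rw [norm_one]
            exact add_le_add le_rfl (le_trans (char_norm_apply_le φ _) (heC _))
    have hterm2 : ‖φ (b δ) - φ (c δ)‖ * ‖(1 : ℂ) - φ (e (F δ))‖ ≤ 2 * ε2 * (1 + C) :=
      mul_le_mul h2.le h3 (norm_nonneg _) (by positivity)
    have heq : 2 * ε2 * (1 + C) = ε / 3 := by
      rw [hε2def]; field_simp; ring
    rw [dist_eq_norm, norm_sub_rev, key]
    calc ‖(φ (c δ) - φ (c δ * e (F δ)))
            + (φ (b δ) - φ (c δ)) * (1 - φ (e (F δ)))‖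
        ≤ ‖φ (c δ) - φ (c δ * e (F δ))‖
            + ‖φ (b δ) - φ (c δ)‖ * ‖(1 : ℂ) - φ (e (F δ))‖ := by
          refine (norm_add_le _ _).trans ?_
          rw [norm_mul]
      _ < ε / 3 + 2 * ε2 * (1 + C) := by
          have := add_lt_add_of_lt_of_le h1 hterm2
          linarith
      _ < ε := by rw [heq]; linarith
end

section
/- Let X be a normed space over ℂ with dim X ≥ 2 and let a ∈ X. Then there is no net (e_α) in the continuous dual X* such that for every b ∈ X*, ‖b(a)·e_α − b‖ → 0 in the dual norm. In particular, the Banach algebra B_a(X) (which is X* with multiplication f·g := f(a)·g) has no approximate identity, bounded or unbounded. -/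
/-!
For a functional `b` with `b a = 0` the net condition reads `‖b‖ → 0`, forcing `b = 0`. But when
`dim X ≥ 2`, Hahn–Banach yields a nonzero continuous functional vanishing at `a`: extend the second
coordinate functional of a linearly independent pair `a, y`.
-/

open Filter Topology

namespace SeparatingDual

variable {R V : Type*} [Field R] [TopologicalSpace R] [IsTopologicalRing R]
  [AddCommGroup V] [TopologicalSpace V] [Module R V] [SeparatingDual R V]

theorem exists_apply_eq_single_of_linearIndependent {ι : Type*} [Fintype ι] [DecidableEq ι]
    {v : ι → V} (hv : LinearIndependent R v) (i : ι) :
    ∃ f : StrongDual R V, ∀ j, f (v j) = (Pi.single i 1 : ι → R) j := by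
  obtain ⟨f, hf⟩ := (dualMap_surjective_iff.mpr
    (linearIndependent_iff_injective_fintypeLinearCombination.mp hv)) (LinearMap.proj i)
  refine ⟨f, fun j => ?_⟩
  have := LinearMap.congr_fun hf (Pi.single j 1)
  simpa [Fintype.linearCombination_apply_single, Pi.single_apply, eq_comm] using this

theorem exists_ne_zero_apply_eq_zero_of_one_lt_rank (h : 1 < Module.rank R V) (x : V) :
    ∃ f : StrongDual R V, f ≠ 0 ∧ f x = 0 := by
  rcases eq_or_ne x 0 with rfl | hx
  · have : Nontrivial V := rank_pos_iff_nontrivial.mp (zero_lt_one.trans h)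
    obtain ⟨y, hy⟩ := exists_ne (0 : V)
    obtain ⟨f, hf⟩ := exists_ne_zero (R := R) hy
    exact ⟨f, fun hf0 => hf (by simp [hf0]), map_zero f⟩
  · obtain ⟨y, hy⟩ := exists_linearIndependent_pair_of_one_lt_rank h hx
    obtain ⟨f, hf⟩ := exists_apply_eq_single_of_linearIndependent hy 1
    refine ⟨f, fun hf0 => ?_, by simpa using hf 0⟩
    simpa [hf0] using hf 1

end SeparatingDual

/-- if `X` is a complex normed space with `dim X ≥ 2` and `a ∈ X`, then there is
no net `(e_α)` in the dual `X* = X →L[ℂ] ℂ` such that `‖b(a) • e_α - b‖ → 0` for every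
`b ∈ X*`.  In particular the Banach algebra `B_a(X)` (the dual `X*` with the multiplication
`f · g := f(a) • g`) has no (right, hence no two-sided) approximate identity, bounded or
unbounded. -/
theorem stmt_2 {X : Type*} [NormedAddCommGroup X] [NormedSpace ℂ X]
    (hdim : 2 ≤ Module.rank ℂ X) (a : X) :
    ¬ ∃ (ι : Type) (_ : Nonempty ι) (_ : SemilatticeSup ι) (e : ι → (X →L[ℂ] ℂ)),
        ∀ b : X →L[ℂ] ℂ, Tendsto (fun i => ‖b a • e i - b‖) atTop (𝓝 0) := by
  rintro ⟨ι, _, _, e, he⟩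
  obtain ⟨b, hb, hba⟩ :=
    SeparatingDual.exists_ne_zero_apply_eq_zero_of_one_lt_rank (Cardinal.one_lt_two.trans_le hdim) a
  have hb_lim : Tendsto (fun _ : ι => ‖b‖) atTop (𝓝 0) :=
    (he b).congr fun i => by rw [hba, zero_smul ℂ (e i), zero_sub, norm_neg]
  exact hb (norm_eq_zero.mp (tendsto_nhds_unique tendsto_const_nhds hb_lim))
end
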